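/- arXiv:2503.10221 — 7 statements merged into one kernel-verified Lean document; each statement's English description precedes it below -/
import Mathlib

section
/- Let f : ℝ → ℝ be of class C^7 and fix x ∈ ℝ. Define, for h > 0, the corrected flux function G_h(y) := f(y) − (h²/24)·f''(y) + (7h⁴/5760)·f''''(y). Then the centered flux difference (G_h(x + h/2) − G_h(x − h/2))/h approximates f'(x) to sixth order: there exist constants C > 0 and δ > 0 such that for all 0 < h < δ, |(G_h(x + h/2) − G_h(x − h/2))/h − f'(x)| ≤ C·h⁶. -/
/-!
Expand `u(x ± h/2)` by Taylor's theorem about `x`: the centered difference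
`u(x + h/2) - u(x - h/2)` equals its odd Taylor terms `2 ∑ (h/2)^k u⁽ᵏ⁾(x) / k!` up to
`O(h^(n+1))` when `u` is `C^(n+1)`. Applying this to `f`, `f''` and `f''''` with remainders
`O(h⁷)`, `O(h⁵)` and `O(h³)`, the weights `h²/24` and `7h⁴/5760` cancel the `h³ f'''(x)` and
`h⁵ f⁽⁵⁾(x)` terms, so the flux difference is `h f'(x) + O(h⁷)`; dividing by `h` gives the claim.
-/

open Set Filter Topology Asymptotics
open scoped Nat

section IteratedDeriv

variable {𝕜 F : Type*} [NontriviallyNormedField 𝕜] [NormedAddCommGroup F] [NormedSpace 𝕜 F]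
  {f : 𝕜 → F}

theorem iteratedDeriv_iteratedDeriv (m k : ℕ) :
    iteratedDeriv m (iteratedDeriv k f) = iteratedDeriv (m + k) f := by
  simp only [iteratedDeriv_eq_iterate, Function.iterate_add_apply]

theorem ContDiff.iteratedDeriv_of_add {m k : ℕ} (hf : ContDiff 𝕜 (m + k : ℕ) f) :
    ContDiff 𝕜 m (iteratedDeriv k f) := by
  rw [iteratedDeriv_eq_iterate]
  exact hf.iterate_deriv' m k

end IteratedDeriv

section Taylor

variable {E : Type*} [NormedAddCommGroup E] [NormedSpace ℝ E] {u : ℝ → E} {n : ℕ}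

theorem taylor_isBigO_univ {x₀ : ℝ} (hu : ContDiff ℝ (n + 1 : ℕ) u) :
    (fun x ↦ u x - taylorWithinEval u n univ x₀ x) =O[𝓝 x₀] fun x ↦ (x - x₀) ^ (n + 1) := by
  have hnext : (fun x ↦ (((n + 1 : ℝ) * n !)⁻¹ * (x - x₀) ^ (n + 1)) •
      iteratedDerivWithin (n + 1) u univ x₀) =O[𝓝 x₀] fun x ↦ (x - x₀) ^ (n + 1) :=
    .of_bound (‖((n + 1 : ℝ) * n !)⁻¹‖ * ‖iteratedDerivWithin (n + 1) u univ x₀‖) <|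
      .of_forall fun x ↦ by rw [norm_smul, norm_mul, mul_right_comm]
  refine ((taylor_isLittleO_univ hu).isBigO.add hnext).congr_left fun x ↦ ?_
  rw [taylorWithinEval_succ]
  abel

theorem taylor_isBigO_comp_const_mul (hu : ContDiff ℝ (n + 1 : ℕ) u) (x c : ℝ) :
    (fun h ↦ u (x + c * h) - taylorWithinEval u n univ x (x + c * h)) =O[𝓝 0]
      fun h ↦ h ^ (n + 1) := by
  have hlim : Tendsto (fun h : ℝ ↦ x + c * h) (𝓝 0) (𝓝 x) := by
    simpa using ((continuous_const_mul c).const_add x).tendsto 0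
  refine ((taylor_isBigO_univ hu).comp_tendsto hlim).trans ?_
  simpa [Function.comp_def, mul_pow] using
    (isBigO_refl (fun h : ℝ ↦ h ^ (n + 1)) _).const_mul_left (c ^ (n + 1))

theorem centered_difference_sub_taylor_isBigO (hu : ContDiff ℝ (n + 1 : ℕ) u) (x : ℝ) :
    (fun h ↦ u (x + h / 2) - u (x - h / 2) -
      (taylorWithinEval u n univ x (x + h / 2) - taylorWithinEval u n univ x (x - h / 2)))
      =O[𝓝 0] fun h ↦ h ^ (n + 1) := by
  refine ((taylor_isBigO_comp_const_mul hu x (1 / 2)).sub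
    (taylor_isBigO_comp_const_mul hu x (-1 / 2))).congr_left fun h ↦ ?_
  rw [show x + 1 / 2 * h = x + h / 2 by ring, show x + -1 / 2 * h = x - h / 2 by ring]
  abel

end Taylor

theorem isBigO_const_mul_pow_mul {l : Filter ℝ} {g : ℝ → ℝ} {m : ℕ} (c : ℝ) (k : ℕ)
    (hg : g =O[l] fun h ↦ h ^ m) :
    (fun h ↦ c * h ^ k * g h) =O[l] fun h ↦ h ^ (k + m) := by
  simpa only [pow_add, mul_assoc] using
    ((isBigO_refl (fun h : ℝ ↦ h ^ k) _).mul hg).const_mul_left c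

theorem exists_bound_div_of_isBigO {N : ℝ → ℝ} {n : ℕ} (hN : N =O[𝓝 0] fun h ↦ h ^ (n + 1)) :
    ∃ C > 0, ∃ δ > 0, ∀ h : ℝ, 0 < h → h < δ → |N h / h| ≤ C * h ^ n := by
  obtain ⟨C, hC, hCN⟩ := hN.exists_pos
  obtain ⟨δ, hδ, hball⟩ := Metric.eventually_nhds_iff.mp hCN.bound
  refine ⟨C, hC, δ, hδ, fun h hpos hlt ↦ ?_⟩
  have hbound := hball (show dist h 0 < δ by rwa [Real.dist_0_eq_abs, abs_of_pos hpos])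
  rw [Real.norm_eq_abs, Real.norm_eq_abs, abs_pow, abs_of_pos hpos] at hbound
  rw [abs_div, abs_of_pos hpos, div_le_iff₀ hpos]
  calc |N h| ≤ C * h ^ (n + 1) := hbound
    _ = C * h ^ n * h := by ring

noncomputable def correctedFlux (f : ℝ → ℝ) (h y : ℝ) : ℝ :=
  f y - h ^ 2 / 24 * iteratedDeriv 2 f y + 7 * h ^ 4 / 5760 * iteratedDeriv 4 f y

theorem correctedFlux_centered_difference_isBigO {f : ℝ → ℝ} (hf : ContDiff ℝ 7 f) (x : ℝ) :
    (fun h ↦ correctedFlux f h (x + h / 2) - correctedFlux f h (x - h / 2) - h * deriv f x)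
      =O[𝓝 0] fun h ↦ h ^ 7 := by
  have hf₇ : ContDiff ℝ (6 + 1 : ℕ) f := by exact_mod_cast hf
  have h₀ := centered_difference_sub_taylor_isBigO hf₇ x
  have h₂ := centered_difference_sub_taylor_isBigO
    (ContDiff.iteratedDeriv_of_add (m := 4 + 1) (k := 2) hf₇) x
  have h₄ := centered_difference_sub_taylor_isBigO
    (ContDiff.iteratedDeriv_of_add (m := 2 + 1) (k := 4) hf₇) x
  refine ((h₀.sub (isBigO_const_mul_pow_mul (1 / 24) 2 h₂)).add
    (isBigO_const_mul_pow_mul (7 / 5760) 4 h₄)).congr_left fun h ↦ ?_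
  simp only [correctedFlux, taylor_within_apply, Finset.sum_range_succ, Finset.sum_range_zero,
    iteratedDerivWithin_univ, iteratedDeriv_iteratedDeriv, iteratedDeriv_zero, iteratedDeriv_one,
    Nat.factorial, smul_eq_mul]
  -- `h³ f'''(x)`: `1/24 - 1/24 = 0`; `h⁵ f⁽⁵⁾(x)`: `1/1920 - 1/576 + 7/5760 = 0`.
  ring

/-- The corrected flux `G_h(y) = f(y) - (h²/24) f''(y) + (7h⁴/5760) f''''(y)` yields a
centered flux difference approximating `f'(x)` to sixth order. -/
theorem aweno_corrected_flux_sixth_order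
    (f : ℝ → ℝ) (hf : ContDiff ℝ 7 f) (x : ℝ) :
    ∃ C > (0 : ℝ), ∃ δ > (0 : ℝ), ∀ h : ℝ, 0 < h → h < δ →
      |((fun y => f y - h ^ 2 / 24 * iteratedDeriv 2 f y
            + 7 * h ^ 4 / 5760 * iteratedDeriv 4 f y) (x + h / 2)
        - (fun y => f y - h ^ 2 / 24 * iteratedDeriv 2 f y
            + 7 * h ^ 4 / 5760 * iteratedDeriv 4 f y) (x - h / 2)) / h
        - deriv f x| ≤ C * h ^ 6 := by
  obtain ⟨C, hC, δ, hδ, hbound⟩ :=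
    exists_bound_div_of_isBigO (correctedFlux_centered_difference_isBigO hf x)
  refine ⟨C, hC, δ, hδ, fun h hpos hlt ↦ ?_⟩
  convert hbound h hpos hlt using 2
  simp only [correctedFlux]
  field_simp
end

section
/- Let f : ℝ → ℝ be of class C^6 and fix x ∈ ℝ. Then the six-point finite-difference stencil on half-integer offsets, D2_h := [−5·f(x − 5h/2) + 39·f(x − 3h/2) − 34·f(x − h/2) − 34·f(x + h/2) + 39·f(x + 3h/2) − 5·f(x + 5h/2)]/(48h²), approximates f''(x) to fourth order: there exist C > 0 and δ > 0 such that for all 0 < h < δ, |D2_h − f''(x)| ≤ C·h⁴. -/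
/-!
The stencil weights `(-5, 39, -34, -34, 39, -5)` at the nodes `t h`, `t ∈ {±1/2, ±3/2, ±5/2}`,
have vanishing moments of orders 0, 1, 3, 4, 5 and second moment 96. Applied to the degree-6
Taylor polynomial of `f` at `x` the stencil therefore returns `48 h² f''(x) + O(h⁶)`, while the
Peano remainder `o((t h)⁶)` at each node contributes `O(h⁶)`; dividing by `48 h²` leaves `O(h⁴)`.
-/

open Set Filter Topology Asymptotics

theorem exists_pos_bound_of_isBigO_nhdsGT {u : ℝ → ℝ} {n : ℕ}
    (hu : u =O[𝓝[>] 0] fun h => h ^ n) :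
    ∃ C > (0 : ℝ), ∃ δ > (0 : ℝ), ∀ h : ℝ, 0 < h → h < δ → |u h| ≤ C * h ^ n := by
  obtain ⟨C, hC, hCu⟩ := hu.exists_pos
  obtain ⟨δ, hδ, hsub⟩ := mem_nhdsGT_iff_exists_Ioo_subset.mp hCu.bound
  refine ⟨C, hC, δ, hδ, fun h h0 hhδ => ?_⟩
  simpa [abs_of_pos h0] using hsub ⟨h0, hhδ⟩

theorem isBigO_div_pow_nhdsNE {g : ℝ → ℝ} {n k : ℕ} (hg : g =O[𝓝 0] fun h => h ^ (n + k)) :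
    (fun h => g h / h ^ k) =O[𝓝[≠] 0] fun h => h ^ n := by
  refine ((hg.mono nhdsWithin_le_nhds).mul (isBigO_refl (fun h => (h ^ k)⁻¹) _)).congr'
    EventuallyEq.rfl ?_
  filter_upwards [self_mem_nhdsWithin] with h (hh : h ≠ 0)
  rw [pow_add, mul_assoc, mul_inv_cancel₀ (pow_ne_zero k hh), mul_one]

theorem isBigO_taylorRemainder_comp_mul {f : ℝ → ℝ} {n : ℕ} (hf : ContDiff ℝ n f) (x t : ℝ) :
    (fun h => (f - taylorWithinEval f n univ x) (x + t * h)) =O[𝓝 0] fun h => h ^ n := by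
  have hnode : Tendsto (fun h : ℝ => x + t * h) (𝓝 0) (𝓝 x) :=
    (by fun_prop : Continuous fun h : ℝ => x + t * h).tendsto' 0 x (by simp)
  have hremainder := (taylor_isLittleO_univ hf).isBigO.comp_tendsto hnode
  simp only [Function.comp_def, add_sub_cancel_left, mul_pow] at hremainder
  exact hremainder.trans (isBigO_const_mul_self _ _ _)

/-- `48 h²` times the Old A-WENO approximation of `f''(x)`. -/
noncomputable def awenoStencil (f : ℝ → ℝ) (x h : ℝ) : ℝ :=
  -5 * f (x - 5 * h / 2) + 39 * f (x - 3 * h / 2) - 34 * f (x - h / 2)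
    - 34 * f (x + h / 2) + 39 * f (x + 3 * h / 2) - 5 * f (x + 5 * h / 2)

theorem awenoStencil_sub_eq_remainder (f : ℝ → ℝ) (x h : ℝ) :
    awenoStencil f x h - 48 * h ^ 2 * iteratedDeriv 2 f x =
      awenoStencil (f - taylorWithinEval f 6 univ x) x h
        - 259 / 120 * iteratedDeriv 6 f x * h ^ 6 := by
  simp only [awenoStencil, Pi.sub_apply, taylor_within_apply, Finset.sum_range_succ,
    Finset.sum_range_zero, iteratedDerivWithin_univ, iteratedDeriv_zero, Nat.factorial,
    smul_eq_mul]
  push_cast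
  ring

theorem isBigO_awenoStencil_taylorRemainder {f : ℝ → ℝ} (hf : ContDiff ℝ 6 f) (x : ℝ) :
    (fun h => awenoStencil (f - taylorWithinEval f 6 univ x) x h) =O[𝓝 0] fun h => h ^ 6 := by
  set R := f - taylorWithinEval f 6 univ x
  have hterm (c t : ℝ) : (fun h => c * R (x + t * h)) =O[𝓝 0] fun h => h ^ 6 :=
    (isBigO_taylorRemainder_comp_mul hf x t).const_mul_left c
  have hnodes : (fun h => awenoStencil R x h) = fun h =>
      -5 * R (x + -(5 / 2) * h) + 39 * R (x + -(3 / 2) * h) - 34 * R (x + -(1 / 2) * h)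
        - 34 * R (x + 1 / 2 * h) + 39 * R (x + 3 / 2 * h) - 5 * R (x + 5 / 2 * h) := by
    funext h
    simp only [awenoStencil]
    ring_nf
  rw [hnodes]
  exact (((((hterm _ _).add (hterm _ _)).sub (hterm _ _)).sub (hterm _ _)).add
    (hterm _ _)).sub (hterm _ _)

/-- The six-point half-integer-offset stencil of the Old A-WENO scheme approximates
the second derivative to fourth order. -/
theorem old_scheme_second_derivative_stencil_fourth_order
    (f : ℝ → ℝ) (hf : ContDiff ℝ 6 f) (x : ℝ) :
    ∃ C > (0 : ℝ), ∃ δ > (0 : ℝ), ∀ h : ℝ, 0 < h → h < δ →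
      |(-5 * f (x - 5 * h / 2) + 39 * f (x - 3 * h / 2) - 34 * f (x - h / 2)
          - 34 * f (x + h / 2) + 39 * f (x + 3 * h / 2) - 5 * f (x + 5 * h / 2))
          / (48 * h ^ 2)
        - iteratedDeriv 2 f x| ≤ C * h ^ 4 := by
  apply exists_pos_bound_of_isBigO_nhdsGT
  have hnum : (fun h => awenoStencil f x h - 48 * h ^ 2 * iteratedDeriv 2 f x)
      =O[𝓝 0] fun h => h ^ 6 := by
    simp only [awenoStencil_sub_eq_remainder]
    exact (isBigO_awenoStencil_taylorRemainder hf x).sub ((isBigO_refl _ _).const_mul_left _)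
  refine ((isBigO_div_pow_nhdsNE (k := 2) (hnum.const_mul_left 48⁻¹)).mono
    (nhdsGT_le_nhdsNE 0)).congr' ?_ EventuallyEq.rfl
  filter_upwards [self_mem_nhdsWithin] with h (hh : 0 < h)
  simp only [awenoStencil]
  field_simp
end

section
/- Let f : ℝ → ℝ be of class C^6 and fix x ∈ ℝ. For h > 0 and a half-integer index s ∈ {1/2, −1/2}, define the Old-Scheme numerical flux with exact point values: F_s(h) := f(x + s·h) − (h²/24)·D2_s(h) + (7h⁴/5760)·D4_s(h), where, writing f_m := f(x + m·h) for integer m, D2_{1/2}(h) := [−5f_{−2} + 39f_{−1} − 34f_0 − 34f_1 + 39f_2 − 5f_3]/(48h²), D4_{1/2}(h) := [f_{−2} − 3f_{−1} + 2f_0 + 2f_1 − 3f_2 + f_3]/(2h⁴), and D2_{−1/2}(h), D4_{−1/2}(h) are the same stencils shifted left by one grid point (using f_{−3}, …, f_2). Then the flux difference (F_{1/2}(h) − F_{−1/2}(h))/h approximates f'(x) to fifth order: there exist C > 0 and δ > 0 such that for all 0 < h < δ, |(F_{1/2}(h) − F_{−1/2}(h))/h − f'(x)| ≤ C·h⁵.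 -/
/-!
Both numerical fluxes are linear in the point values, so their difference is a fixed
antisymmetric eight-point stencil applied to `f`. That stencil maps every polynomial of degree
at most six, centred at `x`, to `h` times its slope at `x`: the even powers cancel by
antisymmetry and the odd powers of degree three and five by the choice of the correction
weights. Subtracting the Taylor polynomial of order six of `f` at `x` therefore leaves the
stencil applied to a remainder that is `o((y - x)⁶)`, which is `O(h⁶)`; dividing by `h` gives
the fifth-order bound.
-/

open Finset

/-- The flux difference `F_{1/2} - F_{-1/2}` of the scheme, after collecting the point values. -/
noncomputable def fluxStencil (g : ℝ → ℝ) (x h : ℝ) : ℝ :=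
  (g (x + h / 2) - g (x - h / 2)) + 17 / 256 * (g (x + h) - g (x - h))
    - 13 / 320 * (g (x + 2 * h) - g (x - 2 * h)) + 19 / 3840 * (g (x + 3 * h) - g (x - 3 * h))

lemma fluxStencil_add (g₁ g₂ : ℝ → ℝ) (x h : ℝ) :
    fluxStencil (fun y => g₁ y + g₂ y) x h = fluxStencil g₁ x h + fluxStencil g₂ x h := by
  simp only [fluxStencil]
  ring

lemma fluxStencil_polynomial (c : ℕ → ℝ) (x h : ℝ) :
    fluxStencil (fun y => ∑ k ∈ range 7, c k * (y - x) ^ k) x h = h * c 1 := by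
  simp only [fluxStencil, sum_range_succ, sum_range_zero]
  ring

-- The absolute values of the eight weights sum to less than `3`.
lemma abs_fluxStencil_le {g : ℝ → ℝ} {x h K : ℝ} (hh : 0 ≤ h)
    (hg : ∀ y, |y - x| ≤ 3 * h → |g y| ≤ K) : |fluxStencil g x h| ≤ 3 * K := by
  have hK : ∀ y, |y - x| ≤ 3 * h → -K ≤ g y ∧ g y ≤ K := fun y hy => abs_le.mp (hg y hy)
  obtain ⟨l₁, u₁⟩ := hK (x + h / 2) (by rw [abs_le]; constructor <;> linarith)
  obtain ⟨l₂, u₂⟩ := hK (x - h / 2) (by rw [abs_le]; constructor <;> linarith)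
  obtain ⟨l₃, u₃⟩ := hK (x + h) (by rw [abs_le]; constructor <;> linarith)
  obtain ⟨l₄, u₄⟩ := hK (x - h) (by rw [abs_le]; constructor <;> linarith)
  obtain ⟨l₅, u₅⟩ := hK (x + 2 * h) (by rw [abs_le]; constructor <;> linarith)
  obtain ⟨l₆, u₆⟩ := hK (x - 2 * h) (by rw [abs_le]; constructor <;> linarith)
  obtain ⟨l₇, u₇⟩ := hK (x + 3 * h) (by rw [abs_le]; constructor <;> linarith)
  obtain ⟨l₈, u₈⟩ := hK (x - 3 * h) (by rw [abs_le]; constructor <;> linarith)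
  rw [fluxStencil, abs_le]
  constructor <;> linarith

lemma taylorWithinEval_univ_eq_sum (f : ℝ → ℝ) (n : ℕ) (x y : ℝ) :
    taylorWithinEval f n Set.univ x y
      = ∑ k ∈ range (n + 1), ((k.factorial : ℝ)⁻¹ * iteratedDeriv k f x) * (y - x) ^ k := by
  rw [taylor_within_apply]
  refine sum_congr rfl fun k _ => ?_
  rw [iteratedDerivWithin_univ, smul_eq_mul]
  ring

lemma exists_abs_sub_taylor_le {f : ℝ → ℝ} {n : ℕ} (hf : ContDiff ℝ n f) (x : ℝ) :
    ∃ ε > 0, ∀ y, |y - x| < ε →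
      |f y - taylorWithinEval f n Set.univ x y| ≤ |y - x| ^ n := by
  have hbound := (taylor_isLittleO_univ (x₀ := x) hf).def one_pos
  obtain ⟨ε, hε, hball⟩ := Metric.eventually_nhds_iff.mp hbound
  refine ⟨ε, hε, fun y hy => ?_⟩
  simpa [Real.norm_eq_abs, abs_pow] using hball (Real.dist_eq y x ▸ hy)

lemma fluxStencil_taylorWithinEval (f : ℝ → ℝ) (x h : ℝ) :
    fluxStencil (taylorWithinEval f 6 Set.univ x) x h = h * deriv f x := by
  rw [show taylorWithinEval f 6 Set.univ x = _ from funext (taylorWithinEval_univ_eq_sum f 6 x),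
    fluxStencil_polynomial]
  simp

lemma old_aweno_flux_difference_eq_fluxStencil (f : ℝ → ℝ) (x : ℝ) {h : ℝ} (hh : h ≠ 0) :
    ((f (x + h / 2)
            - h ^ 2 / 24 *
              ((-5 * f (x - 2 * h) + 39 * f (x - h) - 34 * f x - 34 * f (x + h)
                  + 39 * f (x + 2 * h) - 5 * f (x + 3 * h)) / (48 * h ^ 2))
            + 7 * h ^ 4 / 5760 *
              ((f (x - 2 * h) - 3 * f (x - h) + 2 * f x + 2 * f (x + h)
                  - 3 * f (x + 2 * h) + f (x + 3 * h)) / (2 * h ^ 4)))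
        - (f (x - h / 2)
            - h ^ 2 / 24 *
              ((-5 * f (x - 3 * h) + 39 * f (x - 2 * h) - 34 * f (x - h) - 34 * f x
                  + 39 * f (x + h) - 5 * f (x + 2 * h)) / (48 * h ^ 2))
            + 7 * h ^ 4 / 5760 *
              ((f (x - 3 * h) - 3 * f (x - 2 * h) + 2 * f (x - h) + 2 * f x
                  - 3 * f (x + h) + f (x + 2 * h)) / (2 * h ^ 4)))) / h
      = fluxStencil f x h / h := by
  rw [fluxStencil]
  field_simp
  ring

/-- Spatial truncation error of the Old fifth-order A-WENO scheme: with exact point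
values, the flux difference approximates `f'(x)` to fifth order. Here `f (x + m*h)`
plays the role of the cell-center value `f_m`. -/
theorem old_aweno_flux_difference_fifth_order
    (f : ℝ → ℝ) (hf : ContDiff ℝ 6 f) (x : ℝ) :
    ∃ C > (0 : ℝ), ∃ δ > (0 : ℝ), ∀ h : ℝ, 0 < h → h < δ →
      |((f (x + h / 2)
            - h ^ 2 / 24 *
              ((-5 * f (x - 2 * h) + 39 * f (x - h) - 34 * f x - 34 * f (x + h)
                  + 39 * f (x + 2 * h) - 5 * f (x + 3 * h)) / (48 * h ^ 2))
            + 7 * h ^ 4 / 5760 *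
              ((f (x - 2 * h) - 3 * f (x - h) + 2 * f x + 2 * f (x + h)
                  - 3 * f (x + 2 * h) + f (x + 3 * h)) / (2 * h ^ 4)))
        - (f (x - h / 2)
            - h ^ 2 / 24 *
              ((-5 * f (x - 3 * h) + 39 * f (x - 2 * h) - 34 * f (x - h) - 34 * f x
                  + 39 * f (x + h) - 5 * f (x + 2 * h)) / (48 * h ^ 2))
            + 7 * h ^ 4 / 5760 *
              ((f (x - 3 * h) - 3 * f (x - 2 * h) + 2 * f (x - h) + 2 * f x
                  - 3 * f (x + h) + f (x + 2 * h)) / (2 * h ^ 4)))) / h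
        - deriv f x| ≤ C * h ^ 5 := by
  obtain ⟨ε, hε, hrem⟩ := exists_abs_sub_taylor_le (n := 6) hf x
  refine ⟨2187, by norm_num, ε / 3, by positivity, fun h hh hhε => ?_⟩
  have hsplit : fluxStencil f x h
      = fluxStencil (fun y => f y - taylorWithinEval f 6 Set.univ x y) x h + h * deriv f x := by
    rw [← fluxStencil_taylorWithinEval f x h, ← fluxStencil_add]
    simp only [sub_add_cancel]
  have hremainder :
      |fluxStencil (fun y => f y - taylorWithinEval f 6 Set.univ x y) x h| ≤ 3 * (3 * h) ^ 6 := by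
    refine abs_fluxStencil_le hh.le fun y hy => (hrem y (by linarith)).trans ?_
    exact pow_le_pow_left₀ (abs_nonneg _) hy 6
  rw [old_aweno_flux_difference_eq_fluxStencil f x hh.ne', hsplit, add_div,
    mul_div_cancel_left₀ _ hh.ne', add_sub_cancel_right, abs_div, abs_of_pos hh, div_le_iff₀ hh]
  linarith
end

section
/- Let f : ℝ → ℝ be of class C^6 and fix x ∈ ℝ. For h > 0, write g_m := f(x + (2m+1)·h/2) for integer m (the values of f at the cell interfaces). Define the New-Scheme numerical fluxes F_{1/2}(h) := g_0 − (h²/24)·D2⁺ + (7h⁴/5760)·D4⁺ and F_{−1/2}(h) := g_{−1} − (h²/24)·D2⁻ + (7h⁴/5760)·D4⁻, where D2⁺ := [−g_{−2} + 16g_{−1} − 30g_0 + 16g_1 − g_2]/(12h²), D4⁺ := [g_{−2} − 4g_{−1} + 6g_0 − 4g_1 + g_2]/h⁴, and D2⁻, D4⁻ are the same stencils centered at g_{−1} (using g_{−3}, …, g_1). Then the flux difference (F_{1/2}(h) − F_{−1/2}(h))/h approximates f'(x) to fifth order: there exist C > 0 and δ > 0 such that for all 0 < h < δ, |(F_{1/2}(h)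 − F_{−1/2}(h))/h − f'(x)| ≤ C·h⁵. -/
set_option maxHeartbeats 2000000
open Set Finset

private lemma itDW_eq {f : ℝ → ℝ} (hf : ContDiff ℝ 6 f) {s : Set ℝ}
    (hs : UniqueDiffOn ℝ s) {y : ℝ} (hy : y ∈ s) {n : ℕ} (hn : n ≤ 6) :
    iteratedDerivWithin n f s y = iteratedDeriv n f y := by
  have hf' : HasFTaylorSeriesUpTo (6 : ℕ∞) f (ftaylorSeries ℝ f) :=
    contDiff_iff_ftaylorSeries.mp (by exact_mod_cast hf)
  have h1 : ftaylorSeries ℝ f y n = iteratedFDerivWithin ℝ n f s y :=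
    (hf'.hasFTaylorSeriesUpToOn s).eq_iteratedFDerivWithin_of_uniqueDiffOn
      (by exact_mod_cast hn) hs hy
  rw [iteratedDerivWithin_eq_iteratedFDerivWithin, iteratedDeriv_eq_iteratedFDeriv, ← h1]
  rfl

private lemma oneSided {f : ℝ → ℝ} (hf : ContDiff ℝ 6 f) (x : ℝ) :
    ∃ M : ℝ, ∀ u : ℝ, 0 ≤ u → u ≤ 1 →
      |f (x + u) - ∑ i ∈ Finset.range 6, iteratedDeriv i f x * u ^ i / (Nat.factorial i : ℝ)| ≤ M * u ^ 6 := by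
  have hab : x ≤ x + 1 := by linarith
  have hlt : x < x + 1 := by linarith
  have hfo : ContDiffOn ℝ ((5 : ℕ) + 1) f (Set.Icc x (x + 1)) := by
    exact_mod_cast hf.contDiffOn
  obtain ⟨C, hC⟩ := exists_taylor_mean_remainder_bound hab hfo
  refine ⟨C, fun u hu0 hu1 => ?_⟩
  have hmem : x + u ∈ Set.Icc x (x + 1) := ⟨by linarith, by linarith⟩
  have h1 := hC (x + u) hmem
  have h2 : taylorWithinEval f 5 (Set.Icc x (x + 1)) x (x + u)
      = ∑ i ∈ Finset.range 6, iteratedDeriv i f x * u ^ i / (Nat.factorial i : ℝ) := by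
    rw [taylor_within_apply]
    refine Finset.sum_congr rfl fun k hk => ?_
    rw [itDW_eq hf (uniqueDiffOn_Icc hlt) (Set.left_mem_Icc.mpr hab)
      ((Finset.mem_range.mp hk).le.trans (by norm_num))]
    simp only [add_sub_cancel_left, smul_eq_mul]
    ring
  rw [h2] at h1
  simpa [abs_of_nonneg hu0] using h1

private lemma twoSided {f : ℝ → ℝ} (hf : ContDiff ℝ 6 f) (x : ℝ) :
    ∃ M : ℝ, 0 ≤ M ∧ ∀ u : ℝ, |u| ≤ 1 →
      |f (x + u) - ∑ i ∈ Finset.range 6,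
          iteratedDeriv i f x * u ^ i / (Nat.factorial i : ℝ)| ≤ M * |u| ^ 6 := by
  obtain ⟨M₁, hM₁⟩ := oneSided hf x
  set g : ℝ → ℝ := fun t => f (-t) with hg
  have hgc : ContDiff ℝ 6 g := hf.comp contDiff_neg
  obtain ⟨M₂, hM₂⟩ := oneSided hgc (-x)
  refine ⟨max (max M₁ M₂) 0, le_max_right _ _, fun u hu => ?_⟩
  rcases le_or_gt 0 u with hu0 | hu0
  · have h1 := hM₁ u hu0 (by rwa [abs_of_nonneg hu0] at hu)
    calc _ ≤ M₁ * u ^ 6 := h1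
      _ ≤ max (max M₁ M₂) 0 * |u| ^ 6 := by
          rw [abs_of_nonneg hu0]
          apply mul_le_mul_of_nonneg_right ((le_max_left _ _).trans (le_max_left _ _))
            (by positivity)
  · have hv0 : (0:ℝ) ≤ -u := by linarith
    have hv1 : -u ≤ 1 := by rwa [abs_of_neg hu0] at hu
    have h1 := hM₂ (-u) hv0 hv1
    have harg : g (-x + -u) = f (x + u) := by
      simp only [hg]; ring_nf
    have hsum : ∑ i ∈ Finset.range 6,
        iteratedDeriv i g (-x) * (-u) ^ i / (Nat.factorial i : ℝ)
        = ∑ i ∈ Finset.range 6,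
          iteratedDeriv i f x * u ^ i / (Nat.factorial i : ℝ) := by
      refine Finset.sum_congr rfl fun k _ => ?_
      have hd : iteratedDeriv k g (-x) = (-1 : ℝ) ^ k * iteratedDeriv k f x := by
        have := iteratedDeriv_comp_neg k f (-x)
        simpa [hg, smul_eq_mul] using this
      rw [hd]
      have : (-1 : ℝ) ^ k * (-u) ^ k = u ^ k := by
        rw [← mul_pow]; ring_nf
      congr 1
      linear_combination iteratedDeriv k f x * this
    rw [harg, hsum] at h1
    calc _ ≤ M₂ * (-u) ^ 6 := h1
      _ ≤ max (max M₁ M₂) 0 * |u| ^ 6 := by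
          rw [abs_of_neg hu0]
          apply mul_le_mul_of_nonneg_right ((le_max_right _ _).trans (le_max_left _ _))
            (by positivity)


/-- Spatial truncation error of the New fifth-order A-WENO scheme: with exact
interface values `g_m = f(x + (2m+1)h/2)`, the flux difference approximates `f'(x)`
to fifth order. -/
theorem new_aweno_flux_difference_fifth_order
    (f : ℝ → ℝ) (hf : ContDiff ℝ 6 f) (x : ℝ) :
    ∃ C > (0 : ℝ), ∃ δ > (0 : ℝ), ∀ h : ℝ, 0 < h → h < δ →
      |((f (x + h / 2)
            - h ^ 2 / 24 *
              ((-f (x - 3 * h / 2) + 16 * f (x - h / 2) - 30 * f (x + h / 2)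
                  + 16 * f (x + 3 * h / 2) - f (x + 5 * h / 2)) / (12 * h ^ 2))
            + 7 * h ^ 4 / 5760 *
              ((f (x - 3 * h / 2) - 4 * f (x - h / 2) + 6 * f (x + h / 2)
                  - 4 * f (x + 3 * h / 2) + f (x + 5 * h / 2)) / h ^ 4))
        - (f (x - h / 2)
            - h ^ 2 / 24 *
              ((-f (x - 5 * h / 2) + 16 * f (x - 3 * h / 2) - 30 * f (x - h / 2)
                  + 16 * f (x + h / 2) - f (x + 3 * h / 2)) / (12 * h ^ 2))
            + 7 * h ^ 4 / 5760 *
              ((f (x - 5 * h / 2) - 4 * f (x - 3 * h / 2) + 6 * f (x - h / 2)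
                  - 4 * f (x + h / 2) + f (x + 3 * h / 2)) / h ^ 4))) / h
        - deriv f x| ≤ C * h ^ 5 := by
  obtain ⟨M, hM0, hM⟩ := twoSided hf x
  refine ⟨1000 * M + 1, by positivity, 1/3, by norm_num, fun h hh hδ => ?_⟩
  have hne : h ≠ 0 := ne_of_gt hh
  obtain ⟨P, hP⟩ : ∃ P : ℝ → ℝ, ∀ u : ℝ, P u = iteratedDeriv 0 f x
      + iteratedDeriv 1 f x * u
      + iteratedDeriv 2 f x * u ^ 2 / 2 + iteratedDeriv 3 f x * u ^ 3 / 6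
      + iteratedDeriv 4 f x * u ^ 4 / 24 + iteratedDeriv 5 f x * u ^ 5 / 120 :=
    ⟨_, fun u => rfl⟩
  obtain ⟨r, hr_def⟩ : ∃ r : ℝ → ℝ, ∀ u : ℝ, r u = f (x + u) - P u := ⟨_, fun u => rfl⟩
  have hsum : ∀ u : ℝ, ∑ i ∈ Finset.range 6,
      iteratedDeriv i f x * u ^ i / (Nat.factorial i : ℝ) = P u := by
    intro u
    rw [hP]
    simp [Finset.sum_range_succ, Nat.factorial]
    try ring
  have hr : ∀ u : ℝ, |u| ≤ 1 → |r u| ≤ M * |u| ^ 6 := by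
    intro u hu
    rw [hr_def, ← hsum u]
    exact hM u hu
  have hd1 : deriv f x = iteratedDeriv 1 f x := by simp [iteratedDeriv_one]
  have hf1 : f (x + h / 2) = P (h/2) + r (h/2) := by rw [hr_def]; ring
  have hf3 : f (x + 3 * h / 2) = P (3*h/2) + r (3*h/2) := by
    rw [hr_def, show x + 3*h/2 = x + 3 * h / 2 by ring]; ring
  have hf5 : f (x + 5 * h / 2) = P (5*h/2) + r (5*h/2) := by
    rw [hr_def, show x + 5*h/2 = x + 5 * h / 2 by ring]; ring
  have hfm1 : f (x - h / 2) = P (-(h/2)) + r (-(h/2)) := by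
    rw [hr_def, show x + -(h/2) = x - h / 2 by ring]; ring
  have hfm3 : f (x - 3 * h / 2) = P (-(3*h/2)) + r (-(3*h/2)) := by
    rw [hr_def, show x + -(3*h/2) = x - 3 * h / 2 by ring]; ring
  have hfm5 : f (x - 5 * h / 2) = P (-(5*h/2)) + r (-(5*h/2)) := by
    rw [hr_def, show x + -(5*h/2) = x - 5 * h / 2 by ring]; ring
  have hEq : ((f (x + h / 2)
            - h ^ 2 / 24 *
              ((-f (x - 3 * h / 2) + 16 * f (x - h / 2) - 30 * f (x + h / 2)
                  + 16 * f (x + 3 * h / 2) - f (x + 5 * h / 2)) / (12 * h ^ 2))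
            + 7 * h ^ 4 / 5760 *
              ((f (x - 3 * h / 2) - 4 * f (x - h / 2) + 6 * f (x + h / 2)
                  - 4 * f (x + 3 * h / 2) + f (x + 5 * h / 2)) / h ^ 4))
        - (f (x - h / 2)
            - h ^ 2 / 24 *
              ((-f (x - 5 * h / 2) + 16 * f (x - 3 * h / 2) - 30 * f (x - h / 2)
                  + 16 * f (x + h / 2) - f (x + 3 * h / 2)) / (12 * h ^ 2))
            + 7 * h ^ 4 / 5760 *
              ((f (x - 5 * h / 2) - 4 * f (x - 3 * h / 2) + 6 * f (x - h / 2)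
                  - 4 * f (x + h / 2) + f (x + 3 * h / 2)) / h ^ 4))) / h
        - deriv f x
      = (6750 * (r (h/2) - r (-(h/2))) - 375 * (r (3*h/2) - r (-(3*h/2)))
          + 27 * (r (5*h/2) - r (-(5*h/2)))) / (5760 * h) := by
    rw [hf1, hf3, hf5, hfm1, hfm3, hfm5, hd1]
    rw [hP (h/2), hP (3*h/2), hP (5*h/2), hP (-(h/2)), hP (-(3*h/2)), hP (-(5*h/2))]
    field_simp
    ring
  rw [hEq]
  -- bounds on the remainders
  have hb : ∀ a : ℝ, 0 < a → a * h ≤ 1 → |r (a*h)| ≤ M * a^6 * h ^ 6 := by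
    intro a ha hah
    have hpos : 0 < a * h := mul_pos ha hh
    have h1 := hr (a*h) (by rw [abs_of_pos hpos]; exact hah)
    rwa [abs_of_pos hpos, mul_pow, ← mul_assoc] at h1
  have hbm : ∀ a : ℝ, 0 < a → a * h ≤ 1 → |r (-(a*h))| ≤ M * a^6 * h ^ 6 := by
    intro a ha hah
    have hpos : 0 < a * h := mul_pos ha hh
    have h1 := hr (-(a*h)) (by rw [abs_neg, abs_of_pos hpos]; exact hah)
    rwa [abs_neg, abs_of_pos hpos, mul_pow, ← mul_assoc] at h1
  have e1 : (1/2 : ℝ) * h = h/2 := by ring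
  have e3 : (3/2 : ℝ) * h = 3*h/2 := by ring
  have e5 : (5/2 : ℝ) * h = 5*h/2 := by ring
  have b1 := hb (1/2) (by norm_num) (by rw [e1]; linarith)
  have b3 := hb (3/2) (by norm_num) (by rw [e3]; linarith)
  have b5 := hb (5/2) (by norm_num) (by rw [e5]; linarith)
  have bm1 := hbm (1/2) (by norm_num) (by rw [e1]; linarith)
  have bm3 := hbm (3/2) (by norm_num) (by rw [e3]; linarith)
  have bm5 := hbm (5/2) (by norm_num) (by rw [e5]; linarith)
  rw [e1] at b1 bm1; rw [e3] at b3 bm3; rw [e5] at b5 bm5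
  rw [abs_div, abs_of_pos (by positivity : (0:ℝ) < 5760 * h),
    div_le_iff₀ (by positivity : (0:ℝ) < 5760 * h)]
  have hM6 : 0 ≤ M * h ^ 6 := by positivity
  have h6 : 0 ≤ h ^ 6 := by positivity
  obtain ⟨l1, u1⟩ := abs_le.mp b1
  obtain ⟨l3, u3⟩ := abs_le.mp b3
  obtain ⟨l5, u5⟩ := abs_le.mp b5
  obtain ⟨lm1, um1⟩ := abs_le.mp bm1
  obtain ⟨lm3, um3⟩ := abs_le.mp bm3
  obtain ⟨lm5, um5⟩ := abs_le.mp bm5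
  rw [abs_le]
  constructor <;> nlinarith [hM6, h6]
end

section
/- Let p : ℝ → ℝ be a polynomial of degree at most 5. Then for every x ∈ ℝ and every h > 0, the Old-Scheme flux difference is exactly the derivative: (F_{1/2}(h) − F_{−1/2}(h))/h = p'(x), where, writing p_m := p(x + m·h), F_{1/2}(h) := p(x + h/2) − (h²/24)·[−5p_{−2} + 39p_{−1} − 34p_0 − 34p_1 + 39p_2 − 5p_3]/(48h²) + (7h⁴/5760)·[p_{−2} − 3p_{−1} + 2p_0 + 2p_1 − 3p_2 + p_3]/(2h⁴), and F_{−1/2}(h) is defined by the same formulas shifted left by one grid point (centered at x − h/2, using p_{−3}, …, p_2). -/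
open Polynomial

/-- Exactness of the Old fifth-order A-WENO spatial discretization on polynomials of
degree ≤ 5: the flux difference equals `p'(x)` exactly. Here `p.eval (x + m*h)` plays
the role of the cell-center value `p_m`. -/
theorem old_aweno_flux_difference_exact_deg5
    (p : Polynomial ℝ) (hp : p.natDegree ≤ 5) (x h : ℝ) (hh : 0 < h) :
    ((p.eval (x + h / 2)
          - h ^ 2 / 24 *
            ((-5 * p.eval (x - 2 * h) + 39 * p.eval (x - h) - 34 * p.eval x
                - 34 * p.eval (x + h) + 39 * p.eval (x + 2 * h) - 5 * p.eval (x + 3 * h))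
              / (48 * h ^ 2))
          + 7 * h ^ 4 / 5760 *
            ((p.eval (x - 2 * h) - 3 * p.eval (x - h) + 2 * p.eval x + 2 * p.eval (x + h)
                - 3 * p.eval (x + 2 * h) + p.eval (x + 3 * h)) / (2 * h ^ 4)))
      - (p.eval (x - h / 2)
          - h ^ 2 / 24 *
            ((-5 * p.eval (x - 3 * h) + 39 * p.eval (x - 2 * h) - 34 * p.eval (x - h)
                - 34 * p.eval x + 39 * p.eval (x + h) - 5 * p.eval (x + 2 * h))
              / (48 * h ^ 2))
          + 7 * h ^ 4 / 5760 *
            ((p.eval (x - 3 * h) - 3 * p.eval (x - 2 * h) + 2 * p.eval (x - h)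
                + 2 * p.eval x - 3 * p.eval (x + h) + p.eval (x + 2 * h))
              / (2 * h ^ 4)))) / h
      = (derivative p).eval x := by
  have hlt : p.natDegree < 6 := Nat.lt_succ_of_le hp
  have hev : ∀ y : ℝ, p.eval y = ∑ i ∈ Finset.range 6, p.coeff i * y ^ i := fun y =>
    p.eval_eq_sum_range' hlt y
  have hdlt : (derivative p).natDegree < 6 :=
    Nat.lt_of_le_of_lt (Nat.le_trans (natDegree_derivative_le p) (Nat.sub_le _ _)) hlt
  have hd : (derivative p).eval x
      = ∑ i ∈ Finset.range 6, (derivative p).coeff i * x ^ i :=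
    (derivative p).eval_eq_sum_range' hdlt x
  rw [hd]
  simp only [coeff_derivative]
  have h6 : p.coeff 6 = 0 := coeff_eq_zero_of_natDegree_lt hlt
  simp only [h6, hev, Finset.sum_range_succ, Finset.sum_range_zero]
  push_cast
  field_simp
  ring
end

section
/- Let p : ℝ → ℝ be a polynomial of degree at most 5. Then for every x ∈ ℝ and every h > 0, the New-Scheme flux difference is exactly the derivative: (F_{1/2}(h) − F_{−1/2}(h))/h = p'(x), where, writing g_m := p(x + (2m+1)·h/2), F_{1/2}(h) := g_0 − (h²/24)·[−g_{−2} + 16g_{−1} − 30g_0 + 16g_1 − g_2]/(12h²) + (7h⁴/5760)·[g_{−2} − 4g_{−1} + 6g_0 − 4g_1 + g_2]/h⁴, and F_{−1/2}(h) is given by the same formulas centered at g_{−1} (using g_{−3}, …, g_1). -/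
set_option maxHeartbeats 2000000


open Polynomial

/-- Exactness of the New fifth-order A-WENO spatial discretization on polynomials of
degree ≤ 5: the flux difference equals `p'(x)` exactly. Here `p.eval (x + (2m+1)*h/2)`
plays the role of the interface value `g_m`. -/
theorem new_aweno_flux_difference_exact_deg5
    (p : Polynomial ℝ) (hp : p.natDegree ≤ 5) (x h : ℝ) (hh : 0 < h) :
    ((p.eval (x + h / 2)
          - h ^ 2 / 24 *
            ((-p.eval (x - 3 * h / 2) + 16 * p.eval (x - h / 2) - 30 * p.eval (x + h / 2)
                + 16 * p.eval (x + 3 * h / 2) - p.eval (x + 5 * h / 2)) / (12 * h ^ 2))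
          + 7 * h ^ 4 / 5760 *
            ((p.eval (x - 3 * h / 2) - 4 * p.eval (x - h / 2) + 6 * p.eval (x + h / 2)
                - 4 * p.eval (x + 3 * h / 2) + p.eval (x + 5 * h / 2)) / h ^ 4))
      - (p.eval (x - h / 2)
          - h ^ 2 / 24 *
            ((-p.eval (x - 5 * h / 2) + 16 * p.eval (x - 3 * h / 2) - 30 * p.eval (x - h / 2)
                + 16 * p.eval (x + h / 2) - p.eval (x + 3 * h / 2)) / (12 * h ^ 2))
          + 7 * h ^ 4 / 5760 *
            ((p.eval (x - 5 * h / 2) - 4 * p.eval (x - 3 * h / 2) + 6 * p.eval (x - h / 2)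
                - 4 * p.eval (x + h / 2) + p.eval (x + 3 * h / 2)) / h ^ 4))) / h
      = (derivative p).eval x := by
  have hd : p.natDegree < 6 := Nat.lt_succ_of_le hp
  have hd' : (derivative p).natDegree < 6 :=
    lt_of_le_of_lt (Polynomial.natDegree_derivative_le p) (by omega)
  have hev : ∀ y : ℝ, p.eval y = ∑ i ∈ Finset.range 6, p.coeff i * y ^ i := fun y =>
    Polynomial.eval_eq_sum_range' hd y
  have hev' : (derivative p).eval x
      = ∑ i ∈ Finset.range 6, (derivative p).coeff i * x ^ i :=
    Polynomial.eval_eq_sum_range' hd' x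
  simp only [hev, hev', Polynomial.coeff_derivative, Finset.sum_range_succ,
    Finset.sum_range_zero]
  have hc6 : p.coeff 6 = 0 := Polynomial.coeff_eq_zero_of_natDegree_lt hd
  simp only [hc6]
  have h2 : h ^ 2 ≠ 0 := by positivity
  have h4 : h ^ 4 ≠ 0 := by positivity
  field_simp
  ring
end

section
/- Let d ≥ 1 and N ≥ 1. For j = 0, 1, …, N, let F⁻_j, F⁺_j, E⁻_j, E⁺_j, U⁻_j, U⁺_j ∈ ℝ^d, let M⁻_j, M⁺_j ∈ ℝ^{d×d}, and let a_j ∈ ℝ; for j = 1, …, N let Q_j ∈ ℝ^d. Define for each j: B_{Ψ,j} := F⁺_j − F⁻_j − ½(M⁺_j + M⁻_j)(E⁺_j − E⁻_j), and for j = 1, …, N: B_j := F⁻_j − F⁺_{j−1} − Q_j. Define recursively R⁻_0 := 0, R⁺_0 := B_{Ψ,0}, and for j = 1, …, N: R⁻_j := R⁺_{j−1} + B_j, R⁺_j := R⁻_j + B_{Ψ,j}. Set K^±_j := F^±_j − R^±_j and 𝓚_j := ½(K⁻_j + K⁺_j) − (a_j/2)(U⁺_j − U⁻_j). Assume that for every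 j: E⁺_j = E⁻_j, U⁺_j = U⁻_j, and (for j ≥ 1) Q_j = 0. Then K⁺_j = K⁻_j for every j = 0, …, N, and the numerical flux sequence is constant: 𝓚_j = 𝓚_0 for every j = 0, …, N; in particular 𝓚_j − 𝓚_{j−1} = 0 for all j = 1, …, N. -/
open Matrix

/-- Well-balanced property of the flux globalization based path-conservative central
scheme: at a discrete steady state (`E⁺_j = E⁻_j`, `U⁺_j = U⁻_j`, `Q_j = 0`), the
one-sided global fluxes coincide (`K⁺_j = K⁻_j`) and the numerical flux sequence
`𝓚_j` is constant; in particular all flux differences vanish. -/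
theorem flux_globalization_well_balanced
    (d N : ℕ) (hd : 1 ≤ d) (hN : 1 ≤ N)
    (Fm Fp Em Ep Um Up : ℕ → (Fin d → ℝ))
    (Mm Mp : ℕ → Matrix (Fin d) (Fin d) ℝ)
    (a : ℕ → ℝ) (Q : ℕ → (Fin d → ℝ))
    -- path fluctuations `B_{Ψ,j}` and cell fluctuations `B_j`
    (BΨ B : ℕ → (Fin d → ℝ))
    (hBΨ : ∀ j ≤ N, BΨ j
      = Fp j - Fm j - (1 / 2 : ℝ) • ((Mp j + Mm j).mulVec (Ep j - Em j)))
    (hB : ∀ j, 1 ≤ j → j ≤ N → B j = Fm j - Fp (j - 1) - Q j)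
    -- the recursively defined global variables `R⁻_j`, `R⁺_j`
    (Rm Rp : ℕ → (Fin d → ℝ))
    (hRm0 : Rm 0 = 0) (hRp0 : Rp 0 = BΨ 0)
    (hRm : ∀ j, 1 ≤ j → j ≤ N → Rm j = Rp (j - 1) + B j)
    (hRp : ∀ j, 1 ≤ j → j ≤ N → Rp j = Rm j + BΨ j)
    -- the one-sided global fluxes `K^±_j` and the central numerical flux `𝓚_j`
    (Km Kp 𝓚 : ℕ → (Fin d → ℝ))
    (hKm : ∀ j ≤ N, Km j = Fm j - Rm j)
    (hKp : ∀ j ≤ N, Kp j = Fp j - Rp j)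
    (h𝓚 : ∀ j ≤ N, 𝓚 j
      = (1 / 2 : ℝ) • (Km j + Kp j) - (a j / 2) • (Up j - Um j))
    -- discrete steady-state assumptions
    (hE : ∀ j ≤ N, Ep j = Em j)
    (hU : ∀ j ≤ N, Up j = Um j)
    (hQ : ∀ j, 1 ≤ j → j ≤ N → Q j = 0) :
    (∀ j ≤ N, Kp j = Km j) ∧ (∀ j ≤ N, 𝓚 j = 𝓚 0) ∧
      (∀ j, 1 ≤ j → j ≤ N → 𝓚 j - 𝓚 (j - 1) = 0) := by
  have hBΨ' : ∀ j ≤ N, BΨ j = Fp j - Fm j := by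
    intro j hj
    rw [hBΨ j hj, hE j hj, sub_self, Matrix.mulVec_zero, smul_zero, sub_zero]
  have hRp' : ∀ j ≤ N, Rp j = Rm j + BΨ j := by
    intro j hj
    rcases Nat.eq_zero_or_pos j with h0 | h1
    · subst h0; rw [hRp0, hRm0, zero_add]
    · exact hRp j h1 hj
  have hKpm : ∀ j ≤ N, Kp j = Km j := by
    intro j hj
    rw [hKp j hj, hKm j hj, hRp' j hj, hBΨ' j hj]
    abel
  have hKmconst : ∀ j ≤ N, Km j = Km 0 := by
    intro j
    induction j with
    | zero => intro _; rfl
    | succ n ih =>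
      intro hj
      have hn : n ≤ N := Nat.le_of_succ_le hj
      have h1 : 1 ≤ n + 1 := Nat.succ_le_succ (Nat.zero_le n)
      have hBn : B (n + 1) = Fm (n + 1) - Fp n := by
        rw [hB (n + 1) h1 hj, hQ (n + 1) h1 hj, sub_zero]
        simp
      have : Km (n + 1) = Kp n := by
        rw [hKm (n + 1) hj, hRm (n + 1) h1 hj, hKp n hn]
        simp only [Nat.add_sub_cancel, hBn]
        abel
      rw [this, hKpm n hn, ih hn]
  have h𝓚K : ∀ j ≤ N, 𝓚 j = Km j := by
    intro j hj
    rw [h𝓚 j hj, hU j hj, sub_self, smul_zero, sub_zero, hKpm j hj]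
    ext i
    simp [Pi.smul_apply, Pi.add_apply]
    ring
  have h𝓚const : ∀ j ≤ N, 𝓚 j = 𝓚 0 := by
    intro j hj
    rw [h𝓚K j hj, hKmconst j hj, ← h𝓚K 0 (Nat.zero_le N)]
  refine ⟨hKpm, h𝓚const, ?_⟩
  intro j h1 hj
  rw [h𝓚const j hj, h𝓚const (j - 1) (le_trans (Nat.sub_le j 1) hj), sub_self]
end
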